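/- Let f be a smooth compactly supported function on ℝ and k a nonnegative integer. Then for all x > 0, applying the operator D = (1/(2x))d/dx a total of (k+1) times to W_{k+1/2} f and multiplying by (-1)^{k+1} 2^{2k+1} k!/(2k+1)! recovers f: (-1)^{k+1} (2^{2k+1} k!/(2k+1)!) D^{k+1}(W_{k+1/2} f)(x) = f(x). -/

import Mathlib

open MeasureTheory Real

noncomputable def Dop (f : ℝ → ℝ) : ℝ → ℝ := fun x => deriv f x / (2 * x)

/-- Weyl transform of half-integer order `k + 1/2` (for `y > 0`). -/
noncomputable def WeylHalfInt (k : ℕ) (f : ℝ → ℝ) (y : ℝ) : ℝ :=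
  (2 * Real.Gamma (k + 3/2) / (Real.sqrt Real.pi * (Nat.factorial k))) *
    ∫ x in Set.Ioi y, (x^2 - y^2) ^ k * x * f x

namespace WeylAux

noncomputable def Gk (f : ℝ → ℝ) (k : ℕ) (y : ℝ) : ℝ :=
  ∫ x in Set.Ioi y, (x^2 - y^2)^k * x * f x

noncomputable def Ai (f : ℝ → ℝ) (i : ℕ) (y : ℝ) : ℝ :=
  ∫ x in Set.Ioi y, x^(2*i+1) * f x

variable {f : ℝ → ℝ}

lemma hgint (hfc : Continuous f) (hs : HasCompactSupport f) (i : ℕ) :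
    Integrable (fun x : ℝ => x^(2*i+1) * f x) :=
  ((continuous_pow (2*i+1)).mul hfc).integrable_of_hasCompactSupport hs.mul_left

lemma hasDerivAt_Ai (hfc : Continuous f) (hs : HasCompactSupport f) (i : ℕ) (y : ℝ) :
    HasDerivAt (Ai f i) (-(y^(2*i+1) * f y)) y := by
  set g : ℝ → ℝ := fun x => x^(2*i+1) * f x with hg
  have hgc : Continuous g := (continuous_pow _).mul hfc
  have hgi : Integrable g := hgint hfc hs i
  have key : Ai f i = fun y =>
      (∫ x, g x) - ((∫ x in Set.Iic (0:ℝ), g x) + ∫ u in (0:ℝ)..y, g u) := by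
    funext y
    have h1 := MeasureTheory.integral_add_compl (measurableSet_Iic (a := y)) hgi
    rw [Set.compl_Iic] at h1
    have h2 := intervalIntegral.integral_Iic_sub_Iic (f := g)
      (hgi.integrableOn) (hgi.integrableOn) (a := (0:ℝ)) (b := y)
    simp only [Ai]
    linarith [h1, h2]
  have hF : HasDerivAt (fun y => ∫ u in (0:ℝ)..y, g u) (g y) y :=
    intervalIntegral.integral_hasDerivAt_right hgi.intervalIntegrable
      (hgc.stronglyMeasurableAtFilter _ _) hgc.continuousAt
  rw [key]
  exact ((hF.const_add (∫ x in Set.Iic (0:ℝ), g x)).const_sub (∫ x, g x))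

lemma Gk_eq_sum (hfc : Continuous f) (hs : HasCompactSupport f) (k : ℕ) (y : ℝ) :
    Gk f k y = ∑ i ∈ Finset.range (k+1),
      (k.choose i : ℝ) * (-y^2)^(k-i) * Ai f i y := by
  have hpt : ∀ x : ℝ, (x^2 - y^2)^k * x * f x
      = ∑ i ∈ Finset.range (k+1),
        (k.choose i : ℝ) * (-y^2)^(k-i) * (x^(2*i+1) * f x) := by
    intro x
    rw [sub_eq_add_neg, add_pow, Finset.sum_mul, Finset.sum_mul]
    refine Finset.sum_congr rfl fun i _ => ?_
    have hx : x^(2*i+1) = (x^2)^i * x := by rw [pow_succ, pow_mul]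
    rw [hx]; ring
  have h1 : Gk f k y = ∫ x in Set.Ioi y, ∑ i ∈ Finset.range (k+1),
      (k.choose i : ℝ) * (-y^2)^(k-i) * (x^(2*i+1) * f x) := by
    unfold Gk
    exact MeasureTheory.integral_congr_ae (Filter.Eventually.of_forall fun x => hpt x)
  rw [h1, MeasureTheory.integral_finset_sum]
  · refine Finset.sum_congr rfl fun i _ => ?_
    rw [MeasureTheory.integral_const_mul]
    rfl
  · intro i _
    exact ((hgint hfc hs i).const_mul _).integrableOn

lemma Gk_zero_eq (y : ℝ) : Gk f 0 y = Ai f 0 y := by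
  unfold Gk Ai
  refine MeasureTheory.integral_congr_ae (Filter.Eventually.of_forall fun x => ?_)
  norm_num

lemma hasDerivAt_Gk_zero (hfc : Continuous f) (hs : HasCompactSupport f) (y : ℝ) :
    HasDerivAt (Gk f 0) (-(y * f y)) y := by
  have h := hasDerivAt_Ai hfc hs 0 y
  have he : Gk f 0 = Ai f 0 := funext fun y => Gk_zero_eq y
  rw [he]
  simpa using h

lemma choose_id (n i : ℕ) (h : i ≤ n) :
    (n + 1 - i) * (n+1).choose i = (n+1) * n.choose i := by
  have h1 := Nat.choose_mul_factorial_mul_factorial (Nat.le_succ_of_le h)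
  have h2 := Nat.choose_mul_factorial_mul_factorial h
  have e : n + 1 - i = (n - i) + 1 := by omega
  have key : (n + 1 - i) * (n+1).choose i * (i.factorial * (n-i).factorial)
      = (n+1) * n.choose i * (i.factorial * (n-i).factorial) := by
    calc (n + 1 - i) * (n+1).choose i * (i.factorial * (n-i).factorial)
        = (n+1).choose i * i.factorial * ((n - i + 1) * (n-i).factorial) := by rw [e]; ring
      _ = (n+1).choose i * i.factorial * (n + 1 - i).factorial := by
            rw [e, Nat.factorial_succ]
      _ = (n+1).factorial := h1
      _ = (n+1) * n.factorial := Nat.factorial_succ n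
      _ = (n+1) * (n.choose i * i.factorial * (n-i).factorial) := by rw [h2]
      _ = (n+1) * n.choose i * (i.factorial * (n-i).factorial) := by ring
  exact Nat.eq_of_mul_eq_mul_right (Nat.mul_pos (Nat.factorial_pos _) (Nat.factorial_pos _)) key

lemma hasDerivAt_Gk_succ (hfc : Continuous f) (hs : HasCompactSupport f) (k : ℕ) (y : ℝ) :
    HasDerivAt (Gk f (k+1)) (-(2*y*((k:ℝ)+1)) * Gk f k y) y := by
  have hrw : Gk f (k+1) = fun y => ∑ i ∈ Finset.range (k+2),
      ((k+1).choose i : ℝ) * (-y^2)^(k+1-i) * Ai f i y :=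
    funext fun y => Gk_eq_sum hfc hs (k+1) y
  rw [hrw]
  have hterm : ∀ i ∈ Finset.range (k+2), HasDerivAt
      (fun y => ((k+1).choose i : ℝ) * (-y^2)^(k+1-i) * Ai f i y)
      (((k+1).choose i : ℝ) * (((k+1-i : ℕ):ℝ) * (-y^2)^(k+1-i-1) * (-(2*y)) * Ai f i y
        + (-y^2)^(k+1-i) * (-(y^(2*i+1) * f y)))) y := by
    intro i _
    have h1 : HasDerivAt (fun y : ℝ => -y^2) (-(2*y)) y := by
      have h0 := (hasDerivAt_pow 2 y).neg
      norm_num at h0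
      exact h0
    have h2 : HasDerivAt (fun y : ℝ => (-y^2)^(k+1-i))
        (((k+1-i : ℕ):ℝ) * (-y^2)^(k+1-i-1) * (-(2*y))) y := h1.pow _
    have h3 := (h2.mul (hasDerivAt_Ai hfc hs i y)).const_mul (((k+1).choose i : ℝ))
    have h4 : (fun y => ((k+1).choose i : ℝ) * (-y^2)^(k+1-i) * Ai f i y)
        = fun y => ((k+1).choose i : ℝ) * ((-y^2)^(k+1-i) * Ai f i y) := by
      funext z; ring
    rw [h4]
    exact h3
  have htot := HasDerivAt.fun_sum hterm
  have sum2 : ∑ i ∈ Finset.range (k+2),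
      ((k+1).choose i : ℝ) * ((-y^2)^(k+1-i) * (-(y^(2*i+1) * f y))) = 0 := by
    have hcg : ∀ i ∈ Finset.range (k+2),
        ((k+1).choose i : ℝ) * ((-y^2)^(k+1-i) * (-(y^(2*i+1) * f y)))
        = (-(y * f y)) * ((y^2)^i * (-y^2)^(k+1-i) * ((k+1).choose i : ℝ)) := by
      intro i _
      have hy : y^(2*i+1) = (y^2)^i * y := by rw [pow_succ, pow_mul]
      rw [hy]; ring
    rw [Finset.sum_congr rfl hcg, ← Finset.mul_sum, ← add_pow]
    simp
  have sum1 : ∑ i ∈ Finset.range (k+2),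
      ((k+1).choose i : ℝ) * ((((k+1-i : ℕ):ℝ) * (-y^2)^(k+1-i-1) * (-(2*y))) * Ai f i y)
      = -(2*y*((k:ℝ)+1)) * Gk f k y := by
    rw [Finset.sum_range_succ]
    have hlast : ((k+1).choose (k+1) : ℝ) *
        ((((k+1-(k+1) : ℕ):ℝ) * (-y^2)^(k+1-(k+1)-1) * (-(2*y))) * Ai f (k+1) y) = 0 := by
      simp
    rw [hlast, add_zero, Gk_eq_sum hfc hs k y, Finset.mul_sum]
    refine Finset.sum_congr rfl fun i hi => ?_
    have hik : i ≤ k := Nat.lt_succ_iff.mp (Finset.mem_range.mp hi)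
    have e1 : k + 1 - i - 1 = k - i := by omega
    have e2' : ((k+1-i : ℕ):ℝ) * ((k+1).choose i : ℝ) = ((k+1:ℕ):ℝ) * (k.choose i : ℝ) := by
      exact_mod_cast congrArg (Nat.cast : ℕ → ℝ) (choose_id k i hik)
    rw [e1]
    push_cast at e2' ⊢
    linear_combination (-(2*y) * (-y^2)^(k-i) * Ai f i y) * e2'
  have hsum : ∑ i ∈ Finset.range (k+2),
      ((k+1).choose i : ℝ) * (((k+1-i : ℕ):ℝ) * (-y^2)^(k+1-i-1) * (-(2*y)) * Ai f i y
        + (-y^2)^(k+1-i) * (-(y^(2*i+1) * f y)))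
      = -(2*y*((k:ℝ)+1)) * Gk f k y := by
    have expand : ∀ i ∈ Finset.range (k+2),
        ((k+1).choose i : ℝ) * (((k+1-i : ℕ):ℝ) * (-y^2)^(k+1-i-1) * (-(2*y)) * Ai f i y
          + (-y^2)^(k+1-i) * (-(y^(2*i+1) * f y)))
        = ((k+1).choose i : ℝ) * (((k+1-i : ℕ):ℝ) * (-y^2)^(k+1-i-1) * (-(2*y)) * Ai f i y)
          + ((k+1).choose i : ℝ) * ((-y^2)^(k+1-i) * (-(y^(2*i+1) * f y))) :=
      fun i _ => mul_add _ _ _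
    rw [Finset.sum_congr rfl expand, Finset.sum_add_distrib, sum2, add_zero, sum1]
  rw [← hsum]
  exact htot

lemma Dop_iterate_congr {g h : ℝ → ℝ} {s : Set ℝ} (hso : IsOpen s)
    (hgh : ∀ y ∈ s, g y = h y) (n : ℕ) : ∀ x ∈ s, Dop^[n] g x = Dop^[n] h x := by
  induction n with
  | zero => exact hgh
  | succ n ih =>
    intro x hxs
    rw [Function.iterate_succ_apply', Function.iterate_succ_apply']
    have hderiv : deriv (Dop^[n] g) x = deriv (Dop^[n] h) x := by
      apply Filter.EventuallyEq.deriv_eq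
      filter_upwards [hso.mem_nhds hxs] with y hy using ih y hy
    show deriv (Dop^[n] g) x / (2 * x) = deriv (Dop^[n] h) x / (2 * x)
    rw [hderiv]

lemma Dop_const_mul (c : ℝ) (g : ℝ → ℝ) :
    Dop (fun y => c * g y) = fun x => c * Dop g x := by
  funext x
  unfold Dop
  rw [deriv_const_mul_field]
  ring

lemma Dop_iterate_const_mul (c : ℝ) (n : ℕ) :
    ∀ g : ℝ → ℝ, Dop^[n] (fun y => c * g y) = fun x => c * Dop^[n] g x := by
  induction n with
  | zero => intro g; rfl
  | succ n ih =>
    intro g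
    rw [Function.iterate_succ_apply, Dop_const_mul, ih (Dop g),
      ← Function.iterate_succ_apply]

lemma Dop_iterate_Gk (hfc : Continuous f) (hs : HasCompactSupport f) :
    ∀ k : ℕ, ∀ x : ℝ, 0 < x →
      Dop^[k+1] (Gk f k) x = (-1)^(k+1) * (Nat.factorial k) * f x / 2 := by
  intro k
  induction k with
  | zero =>
    intro x hx
    have h := (hasDerivAt_Gk_zero hfc hs x).deriv
    rw [Function.iterate_one]
    show deriv (Gk f 0) x / (2 * x) = _
    rw [h, Nat.factorial_zero]
    field_simp
    ring
  | succ k ih =>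
    intro x hx
    rw [Function.iterate_succ_apply]
    have heq : ∀ y ∈ Set.Ioi (0:ℝ), Dop (Gk f (k+1)) y
        = (fun y => (-(k+1:ℝ)) * Gk f k y) y := by
      intro y hy
      have hy' : (0:ℝ) < y := hy
      have h := (hasDerivAt_Gk_succ hfc hs k y).deriv
      simp only [Dop, h]
      field_simp
    have h1 := Dop_iterate_congr isOpen_Ioi heq (k+1) x hx
    rw [h1, Dop_iterate_const_mul]
    simp only []
    rw [ih x hx]
    push_cast [Nat.factorial_succ, pow_succ]
    ring

lemma Gamma_k_three_half (k : ℕ) :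
    Real.Gamma ((k:ℝ) + 3/2)
      = Real.sqrt Real.pi * (Nat.factorial (2*k+1)) / (4^k * Nat.factorial k * 2) := by
  induction k with
  | zero =>
    rw [show ((0:ℕ):ℝ) + 3/2 = 1/2 + 1 by norm_num,
      Real.Gamma_add_one (by norm_num), Real.Gamma_one_half_eq]
    norm_num
    ring
  | succ k ih =>
    have hc : ((k+1:ℕ):ℝ) + 3/2 = (((k:ℕ):ℝ) + 3/2) + 1 := by push_cast; ring
    have hne : ((k:ℕ):ℝ) + 3/2 ≠ 0 := by positivity
    rw [hc, Real.Gamma_add_one hne, ih]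
    have h1 : (Nat.factorial (2*(k+1)+1) : ℝ)
        = (2*(k:ℝ)+3) * ((2*(k:ℝ)+2) * (Nat.factorial (2*k+1) : ℝ)) := by
      have he : 2*(k+1)+1 = (2*k+1) + 1 + 1 := by ring
      rw [he, Nat.factorial_succ, Nat.factorial_succ]
      push_cast; ring
    have h2 : (Nat.factorial (k+1) : ℝ) = ((k:ℝ)+1) * (Nat.factorial k : ℝ) := by
      rw [Nat.factorial_succ]; push_cast; ring
    rw [h1, h2]
    have hk : (0:ℝ) < (k:ℝ) + 1 := by positivity
    have hfk : (0:ℝ) < (Nat.factorial k : ℝ) := by positivity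
    field_simp
    ring

end WeylAux

open WeylAux in
theorem Dop_inverts_WeylHalfInt (f : ℝ → ℝ) (hf : ContDiff ℝ (⊤ : ℕ∞) f)
    (hs : HasCompactSupport f) (k : ℕ) (x : ℝ) (hx : 0 < x) :
    (-1:ℝ)^(k+1) * (2^(2*k+1) * (Nat.factorial k) / (Nat.factorial (2*k+1))) *
      (Dop^[k+1] (WeylHalfInt k f)) x = f x := by
  have hfc : Continuous f := hf.continuous
  set c : ℝ := 2 * Real.Gamma (k + 3/2) / (Real.sqrt Real.pi * (Nat.factorial k)) with hc
  have hW : WeylHalfInt k f = fun y => c * Gk f k y := by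
    funext y; rfl
  rw [hW, Dop_iterate_const_mul]
  simp only []
  rw [Dop_iterate_Gk hfc hs k x hx]
  have hG := Gamma_k_three_half k
  have hsq : ((-1:ℝ))^(k+1) * ((-1:ℝ))^(k+1) = 1 := by
    rw [← pow_add]
    exact Even.neg_one_pow ⟨k+1, by ring⟩
  have hpi : Real.sqrt Real.pi ≠ 0 := by
    positivity
  have hfk : (Nat.factorial k : ℝ) ≠ 0 := by positivity
  have hfk2 : (Nat.factorial (2*k+1) : ℝ) ≠ 0 := by positivity
  have h4 : (4:ℝ)^k ≠ 0 := by positivity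
  have h2pow : (2:ℝ)^(2*k+1) = 2 * 4^k := by
    rw [pow_succ, pow_mul]; norm_num; ring
  have hc' : c = (Nat.factorial (2*k+1) : ℝ) / (4^k * (Nat.factorial k)^2) := by
    rw [hc, hG]
    field_simp
  rw [hc', h2pow]
  rcases Nat.even_or_odd (k+1) with hpar | hpar
  · rw [hpar.neg_one_pow]
    field_simp
  · rw [hpar.neg_one_pow]
    field_simp
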